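/- arXiv:1305.6438 — 6 statements merged into one kernel-verified Lean document; each statement's English description precedes it below -/
import Mathlib

section
/- Let G be a group and g ∈ G. Suppose there exist positive integers a, b with gcd(a - 1, b - 1) = 1 and elements x, y ∈ G such that x * g * x⁻¹ = g^a and y * g * y⁻¹ = g^b. Then g lies in the subgroup of G generated by the set of commutators { [h, g] = h * g * h⁻¹ * g⁻¹ : h ∈ G }. -/
theorem stmt_3 {G : Type*} [Group G] (g x y : G) (a b : ℕ)
    (ha : 0 < a) (hb : 0 < b)
    (hcop : IsCoprime ((a : ℤ) - 1) ((b : ℤ) - 1))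
    (hx : x * g * x⁻¹ = g ^ a) (hy : y * g * y⁻¹ = g ^ b) :
    g ∈ Subgroup.closure {z : G | ∃ h : G, z = h * g * h⁻¹ * g⁻¹} := by
  set S := Subgroup.closure {z : G | ∃ h : G, z = h * g * h⁻¹ * g⁻¹} with hS
  have hmemx : g ^ ((a : ℤ) - 1) ∈ S := by
    have : g ^ ((a : ℤ) - 1) = x * g * x⁻¹ * g⁻¹ := by
      rw [hx, zpow_sub, zpow_natCast, zpow_one]
    rw [this]
    exact Subgroup.subset_closure ⟨x, rfl⟩
  have hmemy : g ^ ((b : ℤ) - 1) ∈ S := by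
    have : g ^ ((b : ℤ) - 1) = y * g * y⁻¹ * g⁻¹ := by
      rw [hy, zpow_sub, zpow_natCast, zpow_one]
    rw [this]
    exact Subgroup.subset_closure ⟨y, rfl⟩
  obtain ⟨u, v, huv⟩ := hcop
  have : g = (g ^ ((a : ℤ) - 1)) ^ u * (g ^ ((b : ℤ) - 1)) ^ v := by
    rw [← zpow_mul, ← zpow_mul, ← zpow_add, mul_comm _ u, mul_comm _ v, huv, zpow_one]
  rw [this]
  exact mul_mem (zpow_mem hmemx u) (zpow_mem hmemy v)
end

section
/- Let G be a group, g ∈ G, and m a positive integer such that for every positive integer s, g is conjugate to g^(s^m). Then g lies in the subgroup generated by all commutators [h, g] with h ∈ G. -/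
theorem stmt_4 {G : Type*} [Group G] (g : G) (m : ℕ) (hm : 0 < m)
    (h : ∀ s : ℕ, 0 < s → IsConj g (g ^ (s ^ m))) :
    g ∈ Subgroup.closure {z : G | ∃ h : G, z = h * g * h⁻¹ * g⁻¹} := by
  set H := Subgroup.closure {z : G | ∃ h : G, z = h * g * h⁻¹ * g⁻¹} with hH
  have key : ∀ s : ℕ, 0 < s → g ^ (s ^ m - 1) ∈ H := by
    intro s hs
    obtain ⟨c, hc⟩ := isConj_iff.mp (h s hs)
    have h1 : g ^ (s ^ m) * g⁻¹ ∈ H :=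
      Subgroup.subset_closure ⟨c, by rw [← hc]⟩
    have h2 : g ^ (s ^ m) = g ^ (s ^ m - 1) * g := by
      rw [← pow_succ, Nat.sub_add_cancel (Nat.one_le_pow _ _ hs)]
    rw [h2, mul_inv_cancel_right] at h1
    exact h1
  set a := 2 ^ m - 1 with ha
  have hapos : 0 < a := by
    have : 2 ≤ 2 ^ m := Nat.one_lt_two_pow_iff.mpr hm.ne'
    omega
  set b := a ^ m - 1 with hb
  have hga : g ^ a ∈ H := key 2 (by norm_num)
  have hgb : g ^ b ∈ H := key a hapos
  have hcop : Nat.Coprime a b := by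
    have h1 : a ∣ a ^ m := dvd_pow_self a hm.ne'
    have h2 : 1 ≤ a ^ m := Nat.one_le_pow _ _ hapos
    have hd : Nat.gcd a b ∣ 1 := by
      have d1 : Nat.gcd a b ∣ a ^ m := (Nat.gcd_dvd_left a b).trans h1
      have d2 : Nat.gcd a b ∣ b := Nat.gcd_dvd_right a b
      have := Nat.dvd_sub d1 d2
      rwa [hb, Nat.sub_sub_self h2] at this
    exact Nat.eq_one_of_dvd_one hd
  have bez := Nat.gcd_eq_gcd_ab a b
  rw [hcop] at bez
  have : g = (g ^ (a : ℤ)) ^ Nat.gcdA a b * (g ^ (b : ℤ)) ^ Nat.gcdB a b := by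
    rw [← zpow_mul, ← zpow_mul, ← zpow_add, ← bez]
    simp
  rw [this]
  exact mul_mem (Subgroup.zpow_mem H (by simpa using hga) _)
    (Subgroup.zpow_mem H (by simpa using hgb) _)
end

section
/- Let C be a type and let a : ℕ+ × C → ℤ be a function such that for every prime p and every positive integer u divisible by p and every c ∈ C, a(u, c) = p · a(p·u, c). Then a(t, c) = 0 for every t > 1 and every c ∈ C. -/
/-!
Fix `c` and a prime `p ∣ t`. Since `p` still divides `p * u`, the relation
`a (u, c) = p * a (p * u, c)` can be iterated, so every power of `p` divides `a (t, c)`;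
an integer divisible by arbitrarily high powers of `p` is `0`.
-/

theorem PNat.pow_dvd_of_eq_mul_apply_mul {f : ℕ+ → ℤ} {p : ℕ+}
    (hf : ∀ u : ℕ+, (p : ℕ) ∣ (u : ℕ) → f u = (p : ℤ) * f (p * u)) :
    ∀ (k : ℕ) {u : ℕ+}, (p : ℕ) ∣ (u : ℕ) → (p : ℤ) ^ k ∣ f u
  | 0, _, _ => one_dvd _
  | k + 1, u, hu => by
    rw [hf u hu, pow_succ']
    exact mul_dvd_mul_left _ (pow_dvd_of_eq_mul_apply_mul hf k (dvd_mul_right _ _))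

theorem PNat.eq_zero_of_eq_mul_apply_mul {f : ℕ+ → ℤ} {p : ℕ+} (hp : p ≠ 1)
    (hf : ∀ u : ℕ+, (p : ℕ) ∣ (u : ℕ) → f u = (p : ℤ) * f (p * u))
    {u : ℕ+} (hu : (p : ℕ) ∣ (u : ℕ)) : f u = 0 := by
  have hinf : ¬FiniteMultiplicity (p : ℤ) (f u) := FiniteMultiplicity.not_iff_forall.mpr
    fun k => pow_dvd_of_eq_mul_apply_mul hf k hu
  rw [Int.finiteMultiplicity_iff, not_and_not_right] at hinf
  exact hinf (by simpa using PNat.coe_eq_one_iff.not.mpr hp)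

theorem stmt_9 {C : Type*} (a : ℕ+ × C → ℤ)
    (h : ∀ p : ℕ+, (p : ℕ).Prime → ∀ u : ℕ+, (p : ℕ) ∣ (u : ℕ) → ∀ c : C,
      a (u, c) = (p : ℤ) * a (p * u, c)) :
    ∀ t : ℕ+, 1 < t → ∀ c : C, a (t, c) = 0 := by
  intro t ht c
  obtain ⟨p, hp, hpt⟩ := Nat.exists_prime_and_dvd (PNat.coe_eq_one_iff.not.mpr ht.ne')
  exact PNat.eq_zero_of_eq_mul_apply_mul (p := ⟨p, hp.pos⟩) (f := fun u => a (u, c))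
    (fun h1 => hp.ne_one (congrArg PNat.val h1)) (fun u hu => h ⟨p, hp.pos⟩ hp u hu c) hpt
end

section
/- Let G be a group and let a₁,…,a_n be nonzero integers and [g₁],…,[g_n] pairwise distinct conjugacy classes of G. If for a positive integer s the formal sums Σᵢ aᵢ·[gᵢ] and Σᵢ aᵢ·[gᵢ^s] are equal in the free abelian group on the set of conjugacy classes of G, then the map [g] ↦ [g^s] restricts to a bijection of the set S = {[g₁],…,[g_n]} onto itself. -/
theorem stmt_11 {G : Type*} [Group G] (n : ℕ) (g : Fin n → G) (a : Fin n → ℤ)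
    (ha : ∀ i, a i ≠ 0)
    (hdist : Function.Injective fun i => ConjClasses.mk (g i))
    (s : ℕ) (hs : 0 < s)
    (heq : (∑ i, Finsupp.single (ConjClasses.mk (g i)) (a i)) =
           (∑ i, Finsupp.single (ConjClasses.mk (g i ^ s)) (a i))) :
    ∃ σ : Equiv.Perm (Fin n),
      ∀ i, ConjClasses.mk (g i ^ s) = ConjClasses.mk (g (σ i)) := by
  classical
  have key : ∀ i, ∃ j, ConjClasses.mk (g j ^ s) = ConjClasses.mk (g i) := by
    intro i
    by_contra h
    push_neg at h
    have h1 := congrFun (congrArg DFunLike.coe heq) (ConjClasses.mk (g i))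
    simp only [Finsupp.coe_finset_sum, Finset.sum_apply, Finsupp.single_apply] at h1
    have hl : ∑ j, (if ConjClasses.mk (g j) = ConjClasses.mk (g i) then a j else 0) = a i := by
      rw [Finset.sum_eq_single i]
      · simp
      · intro j _ hj
        exact if_neg (fun hc => hj (hdist hc))
      · simp
    have hr : ∑ j, (if ConjClasses.mk (g j ^ s) = ConjClasses.mk (g i) then a j else 0) = 0 :=
      Finset.sum_eq_zero fun j _ => if_neg (h j)
    rw [hl, hr] at h1
    exact ha i h1
  choose t ht using key
  have htinj : Function.Injective t := fun i j hij =>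
    hdist (show ConjClasses.mk (g i) = ConjClasses.mk (g j) by rw [← ht i, ← ht j, hij])
  let σ := Equiv.ofBijective t (Finite.injective_iff_bijective.mp htinj)
  refine ⟨σ.symm, fun i => ?_⟩
  have h2 := ht (σ.symm i)
  rwa [show t (σ.symm i) = i from σ.apply_symm_apply i] at h2
end

section
/- Let G be a group, let S be a finite set of conjugacy classes of G, each of a nontrivial element, and suppose that for every positive integer s the map [g] ↦ [g^s] restricts to a bijection of S onto itself. Then, with m the least common multiple of 1,…,|S|, every g with [g] ∈ S satisfies: g is conjugate to g^(s^m) for every positive integer s. -/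
def pmAux {G : Type*} [Group G] (s : ℕ) : ConjClasses G → ConjClasses G :=
  Quotient.map (· ^ s) (fun _ _ h => by
    obtain ⟨c, hc⟩ := h
    exact ⟨c, hc.pow_right s⟩)

theorem pmAux_mk {G : Type*} [Group G] (s : ℕ) (g : G) :
    pmAux s (ConjClasses.mk g) = ConjClasses.mk (g ^ s) := rfl

theorem stmt_12 {G : Type*} [Group G] (S : Finset (ConjClasses G))
    (hnontriv : ∀ c ∈ S, c ≠ (1 : ConjClasses G))
    (hbij : ∀ s : ℕ, 0 < s →
      (∀ g : G, ConjClasses.mk g ∈ S → ConjClasses.mk (g ^ s) ∈ S) ∧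
      (∀ g h : G, ConjClasses.mk g ∈ S → ConjClasses.mk h ∈ S →
        ConjClasses.mk (g ^ s) = ConjClasses.mk (h ^ s) →
        ConjClasses.mk g = ConjClasses.mk h) ∧
      (∀ h : G, ConjClasses.mk h ∈ S → ∃ g : G, ConjClasses.mk g ∈ S ∧
        ConjClasses.mk (g ^ s) = ConjClasses.mk h))
    (m : ℕ) (hm : m = (Finset.Icc 1 S.card).lcm id) :
    ∀ g : G, ConjClasses.mk g ∈ S → ∀ s : ℕ, 0 < s →
      IsConj g (g ^ (s ^ m)) := by
  classical
  intro g hg s hs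
  obtain ⟨h1, h2, _⟩ := hbij s hs
  have hmapS : ∀ c ∈ S, pmAux s c ∈ S := by
    intro c hc
    obtain ⟨x, rfl⟩ := ConjClasses.mk_surjective c
    exact h1 x hc
  set F : {x // x ∈ S} → {x // x ∈ S} := fun x => ⟨pmAux s x.1, hmapS x.1 x.2⟩ with hF
  have hFinj : Function.Injective F := by
    rintro ⟨a, ha⟩ ⟨b, hb⟩ hab
    obtain ⟨x, rfl⟩ := ConjClasses.mk_surjective a
    obtain ⟨y, rfl⟩ := ConjClasses.mk_surjective b
    apply Subtype.ext
    apply h2 x y ha hb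
    simpa [hF, pmAux_mk] using congrArg Subtype.val hab
  let e : Equiv.Perm {x // x ∈ S} := Equiv.ofBijective F (Finite.injective_iff_bijective.mp hFinj)
  have horder : orderOf e ∣ m := by
    rw [← Equiv.Perm.lcm_cycleType]
    apply Multiset.lcm_dvd.mpr
    intro k hk
    have h2k : 2 ≤ k := Equiv.Perm.two_le_of_mem_cycleType hk
    have hle : k ≤ S.card := by
      calc k ≤ e.cycleType.sum := Multiset.single_le_sum (fun _ _ => Nat.zero_le _) _ hk
        _ = e.support.card := Equiv.Perm.sum_cycleType e
        _ ≤ Fintype.card {x // x ∈ S} := Finset.card_le_univ _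
        _ = S.card := Fintype.card_coe S
    rw [hm]
    exact Finset.dvd_lcm (Finset.mem_Icc.mpr ⟨by omega, hle⟩)
  have hem : e ^ m = 1 := orderOf_dvd_iff_pow_eq_one.mp horder
  have key : ∀ k : ℕ, ((e ^ k) ⟨ConjClasses.mk g, hg⟩).1 = ConjClasses.mk (g ^ s ^ k) := by
    intro k
    induction k with
    | zero => simp
    | succ n ih =>
      have : (e ^ (n + 1)) ⟨ConjClasses.mk g, hg⟩ = e ((e ^ n) ⟨ConjClasses.mk g, hg⟩) := by
        rw [pow_succ', Equiv.Perm.mul_apply]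
      rw [this]
      have he : ∀ y : {x // x ∈ S}, (e y).1 = pmAux s y.1 := fun y => rfl
      rw [he, ih, pmAux_mk, pow_succ, pow_mul]
  have := key m
  rw [hem] at this
  simp only [Equiv.Perm.one_apply] at this
  exact ConjClasses.mk_eq_mk_iff_isConj.mp this
end

section
/- Let G be a group such that the intersection P of the transfinite lower central series of G contains no subgroup isomorphic to ℚ; equivalently, suppose the maximal subgroup P ≤ G with P = [G,P] contains no subgroup isomorphic to ℚ. Then every subgroup D ≤ G isomorphic to ℚ has nontrivial central image in the quotient G/[G,N], where N is the normal closure of D. -/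
/-! If the image of `D` in `G ⧸ ⁅G, N⁆` were trivial, then `D ⊆ ⁅G, N⁆` and hence
`N = ⁅G, N⁆`, so `N` would be a relatively perfect subgroup containing a copy of `ℚ`.
Centrality holds for any normal `N`, since `⁅G, N⁆` is killed in the quotient. -/

namespace Subgroup

variable {G : Type*} [Group G]

theorem map_mk'_le_center_quotient_commutator_top (N : Subgroup G) [N.Normal] :
    N.map (QuotientGroup.mk' ⁅(⊤ : Subgroup G), N⁆) ≤ center (G ⧸ ⁅(⊤ : Subgroup G), N⁆) := by
  rw [← commutator_top_left_eq_bot_iff_le_center,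
    ← map_top_of_surjective _ (QuotientGroup.mk'_surjective _), ← map_commutator,
    map_eq_bot_iff, QuotientGroup.ker_mk']

theorem commutator_top_normalClosure_eq_of_subset {D : Set G}
    (hD : D ⊆ (⁅(⊤ : Subgroup G), normalClosure D⁆ : Subgroup G)) :
    ⁅(⊤ : Subgroup G), normalClosure D⁆ = normalClosure D :=
  le_antisymm (commutator_le_right _ _) (normalClosure_le_normal hD)

end Subgroup

theorem stmt_16 {G : Type*} [Group G]
    (hP : ∀ P : Subgroup G, ⁅(⊤ : Subgroup G), P⁆ = P →
      ∀ D : Subgroup G, D ≤ P → ¬ Nonempty (D ≃* Multiplicative ℚ)) :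
    ∀ D : Subgroup G, Nonempty (D ≃* Multiplicative ℚ) →
      (∃ d ∈ D, (QuotientGroup.mk d :
          G ⧸ ⁅(⊤ : Subgroup G), Subgroup.normalClosure (D : Set G)⁆) ≠ 1) ∧
      (∀ d ∈ D, (QuotientGroup.mk d :
          G ⧸ ⁅(⊤ : Subgroup G), Subgroup.normalClosure (D : Set G)⁆) ∈
        Subgroup.center
          (G ⧸ ⁅(⊤ : Subgroup G), Subgroup.normalClosure (D : Set G)⁆)) := by
  intro D hD
  refine ⟨?_, fun d hd ↦ Subgroup.map_mk'_le_center_quotient_commutator_top _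
    ⟨d, Subgroup.subset_normalClosure hd, rfl⟩⟩
  by_contra! hD_trivial
  have hperfect := Subgroup.commutator_top_normalClosure_eq_of_subset
    fun d hd ↦ (QuotientGroup.eq_one_iff d).mp (hD_trivial d hd)
  exact hP _ hperfect D Subgroup.subset_normalClosure hD
end
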